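/- Let M be a full positive definite integral lattice on a quadratic space (V, q) over ℚ with an automorphism σ of odd prime order p, let V₀ be the fixed space of σ, M₀ = M ∩ V₀, and let n ≥ 1. Then for every symmetric n × n integer matrix S one has the congruence A(M,S) ≡ A(M₀,S) (mod p), where A(L,S) = #{(x₁,…,x_n) ∈ L^n : b(x_i,x_j) = S_{ij}} and S is assumed positive definite (so both counts are finite). -/

import Mathlib

/-!
The matrix `S` is represented by only finitely many tuples from `M`: a positive definite form
bounds every linear coordinate on `{v | q v ≤ c}` (Cauchy–Schwarz), and a finitely generated
`ℤ`-lattice has bounded denominators in each coordinate. The isometry `σ` permutes these tuples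
componentwise with `σ ^ p = 1`, so every orbit has size `1` or `p`; the fixed tuples are exactly
those with entries in `M₀`.
-/

open Set Function QuadraticMap

theorem QuadraticMap.PosDef.exists_sq_le_mul {K V : Type*} [Field K] [LinearOrder K]
    [IsStrictOrderedRing K] [AddCommGroup V] [Module K V] [FiniteDimensional K V]
    {q : QuadraticForm K V} (hq : q.PosDef) (φ : Module.Dual K V) :
    ∃ C, 0 ≤ C ∧ ∀ v, φ v ^ 2 ≤ C * q v := by
  set B : LinearMap.BilinForm K V := q.polarBilin
  have hBself (v : V) : B v v = 2 * q v := by simp [B, polar_self, two_smul, two_mul]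
  have hBnonneg (v : V) : 0 ≤ B v v := by rw [hBself]; exact mul_nonneg zero_le_two (hq.nonneg v)
  have hBsymm : LinearMap.IsSymm B := ⟨fun x y => polar_comm q x y⟩
  have hB : B.Nondegenerate := (B.nondegenerate_iff' hBnonneg hBsymm).2 fun v hv => by
    rw [hBself]; exact mul_pos zero_lt_two (hq v hv)
  set w := (B.toDual hB).symm φ
  refine ⟨2 * B w w, mul_nonneg zero_le_two (hBnonneg w), fun v => ?_⟩
  calc φ v ^ 2 = B w v ^ 2 := by rw [LinearMap.BilinForm.apply_toDual_symm_apply]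
    _ ≤ B w w * B v v := B.apply_sq_le_of_symm hBnonneg hBsymm w v
    _ = 2 * B w w * q v := by rw [hBself v]; ring

theorem Rat.finite_setOf_isInteger_smul_abs_le {a : ℤ} (ha : a ≠ 0) (R : ℚ) :
    {x : ℚ | IsLocalization.IsInteger ℤ (a • x) ∧ |x| ≤ R}.Finite := by
  set T := ⌈|(a : ℚ)| * R⌉
  refine ((Set.finite_Icc (-T) T).image fun z : ℤ => (z : ℚ) / a).subset ?_
  rintro x ⟨⟨z, hz⟩, hx⟩
  have hza : (z : ℚ) = a * x := by simpa [zsmul_eq_mul] using hz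
  have hzT : |(z : ℚ)| ≤ T := by
    rw [hza, abs_mul]
    exact (mul_le_mul_of_nonneg_left hx (abs_nonneg _)).trans (Int.le_ceil _)
  refine ⟨z, abs_le.1 (by exact_mod_cast hzT), ?_⟩
  field_simp
  rw [hza, mul_comm]

section Lattice

variable {V : Type*} [AddCommGroup V] [Module ℚ V] [FiniteDimensional ℚ V]
  {q : QuadraticForm ℚ V} {M : Submodule ℤ V}

theorem QuadraticMap.PosDef.finite_image_setOf_mem_le (hq : q.PosDef) (hM : M.FG)
    (φ : Module.Dual ℚ V) (c : ℚ) : (φ '' {v | v ∈ M ∧ q v ≤ c}).Finite := by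
  obtain ⟨C, hC, hφ⟩ := hq.exists_sq_le_mul φ
  obtain ⟨a, ha, hint⟩ :=
    FractionalIdeal.isFractional_of_fg (S := nonZeroDivisors ℤ) (hM.map (φ.restrictScalars ℤ))
  refine (Rat.finite_setOf_isInteger_smul_abs_le (nonZeroDivisors.ne_zero ha)
    (C * c + 1)).subset ?_
  rintro _ ⟨v, ⟨hvM, hvc⟩, rfl⟩
  refine ⟨hint _ (Submodule.mem_map_of_mem hvM), ?_⟩
  nlinarith [hφ v, sq_abs (φ v), sq_nonneg (|φ v| - 1), mul_le_mul_of_nonneg_left hvc hC]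

theorem QuadraticMap.PosDef.finite_setOf_mem_le (hq : q.PosDef) (hM : M.FG) (c : ℚ) :
    {v | v ∈ M ∧ q v ≤ c}.Finite := by
  set b := Module.finBasis ℚ V
  refine Set.Finite.of_finite_image ?_ b.equivFun.injective.injOn
  refine (Set.Finite.pi fun i => hq.finite_image_setOf_mem_le hM (b.coord i) c).subset ?_
  rintro _ ⟨v, hv, rfl⟩ i -
  exact ⟨v, hv, by simp⟩

end Lattice

theorem Set.MapsTo.card_modEq_card_setOf_fixed {α : Type*} {p : ℕ} (hp : p.Prime) {s : Set α}
    (hs : s.Finite) {f : α → α} (hf : MapsTo f s s) (hfp : f^[p] = id) :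
    Nat.card s ≡ Nat.card {x ∈ s | f x = x} [MOD p] := by
  classical
  have := hs.fintype
  have := Fact.mk hp
  let g : Function.End s := hf.restrict f s s
  have hg : g ^ p ^ 1 = 1 := by
    rw [pow_one]
    refine (hf.iterate_restrict p).trans ?_
    ext x
    exact congrFun hfp x
  have hfix : fixedPoints g ≃ {x ∈ s | f x = x} :=
    (Equiv.subtypeEquivRight fun x => Subtype.ext_iff).trans
      (Equiv.subtypeSubtypeEquivSubtypeInter (· ∈ s) fun x => f x = x)
  rw [Nat.card_eq_fintype_card, Nat.card_congr hfix.symm, Nat.card_eq_fintype_card]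
  exact Equiv.Perm.card_fixedPoints_modEq hg

section Representations

variable {V ι : Type*} [AddCommGroup V] [Module ℚ V] (q : QuadraticForm ℚ V)

def representations (L : Submodule ℤ V) (S : Matrix ι ι ℚ) : Set (ι → V) :=
  {x | (∀ i, x i ∈ L) ∧ ∀ i j, polar q (x i) (x j) = S i j}

variable {q} {M : Submodule ℤ V} {S : Matrix ι ι ℚ}

theorem representations_finite [Finite ι] [FiniteDimensional ℚ V] (hq : q.PosDef) (hM : M.FG) :
    (representations q M S).Finite := by
  refine (Set.Finite.pi fun i => hq.finite_setOf_mem_le hM (S i i / 2)).subset ?_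
  rintro x ⟨hxM, hxS⟩ i -
  have hqx : 2 * q (x i) = S i i := by rw [← hxS i i, polar_self, two_smul, two_mul]
  exact ⟨hxM i, by linarith⟩

theorem mapsTo_smul_representations {σ : V ≃ₗ[ℚ] V} (hσq : ∀ v, q (σ v) = q v)
    (hσM : ∀ v ∈ M, σ v ∈ M) :
    MapsTo (σ • ·) (representations q M S) (representations q M S) := by
  rintro x ⟨hxM, hxS⟩
  refine ⟨fun i => hσM _ (hxM i), fun i j => ?_⟩
  rw [← hxS i j]
  simp only [Pi.smul_apply, LinearEquiv.smul_def, polar, ← map_add, hσq]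

theorem setOf_mem_representations_smul_eq {σ : V ≃ₗ[ℚ] V} {M₀ : Submodule ℤ V}
    (hM₀ : ∀ v, v ∈ M₀ ↔ v ∈ M ∧ σ v = v) :
    {x ∈ representations q M S | σ • x = x} = representations q M₀ S := by
  ext x
  simp only [representations, Set.mem_ofPred_eq, hM₀, funext_iff, Pi.smul_apply,
    LinearEquiv.smul_def, forall_and]
  tauto

end Representations

theorem representation_numbers_congruent_fixed_lattice_general
    (V : Type*) [AddCommGroup V] [Module ℚ V] [FiniteDimensional ℚ V]
    (q : QuadraticForm ℚ V) (hqpos : ∀ v : V, v ≠ 0 → 0 < q v)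
    (p : ℕ) (hp : p.Prime)
    (σ : V ≃ₗ[ℚ] V) (hσq : ∀ v : V, q (σ v) = q v) (hσp : σ ^ p = 1)
    (M : Submodule ℤ V) (hMfg : M.FG)
    (hσM : ∀ x ∈ M, σ x ∈ M)
    (V₀ : Submodule ℚ V) (hV₀ : ∀ v : V, v ∈ V₀ ↔ σ v = v)
    (M₀ : Submodule ℤ V) (hM₀ : M₀ = M ⊓ V₀.restrictScalars ℤ)
    (n : ℕ)
    (S : Matrix (Fin n) (Fin n) ℤ) :
    (Nat.card {x : Fin n → V // (∀ i, x i ∈ M) ∧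
        ∀ i j, QuadraticMap.polar q (x i) (x j) = (S i j : ℚ)} : ℤ) ≡
      (Nat.card {x : Fin n → V // (∀ i, x i ∈ M₀) ∧
        ∀ i j, QuadraticMap.polar q (x i) (x j) = (S i j : ℚ)} : ℤ) [ZMOD (p : ℤ)] := by
  have hM₀mem (v : V) : v ∈ M₀ ↔ v ∈ M ∧ σ v = v := by
    rw [hM₀, Submodule.mem_inf, Submodule.restrictScalars_mem, hV₀]
  have hσ_iterate : (σ • · : (Fin n → V) → Fin n → V)^[p] = id := by
    rw [smul_iterate, hσp]
    exact funext (one_smul _)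
  have key := (mapsTo_smul_representations (S := S.map (↑)) hσq hσM).card_modEq_card_setOf_fixed
    hp (representations_finite hqpos hMfg) hσ_iterate
  rw [setOf_mem_representations_smul_eq hM₀mem] at key
  exact Int.natCast_modEq_iff.2 key

/-- Let `M` be a full positive definite integral lattice on a quadratic space `(V, q)` over `ℚ`
with an automorphism `σ` of odd prime order `p`, let `V₀` be the fixed space of `σ`,
`M₀ = M ∩ V₀`, and let `n ≥ 1`.  Then for every positive definite symmetric `n × n` integer
matrix `S` one has the congruence `A(M, S) ≡ A(M₀, S) (mod p)`, where
`A(L, S) = #{(x₁, …, x_n) ∈ L^n : b (xᵢ) (xⱼ) = Sᵢⱼ}` (with `b = QuadraticMap.polar q`). -/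
theorem representation_numbers_congruent_fixed_lattice
    (V : Type*) [AddCommGroup V] [Module ℚ V] [FiniteDimensional ℚ V]
    (q : QuadraticForm ℚ V) (hqpos : ∀ v : V, v ≠ 0 → 0 < q v)
    (p : ℕ) (hp : p.Prime) (hodd : Odd p)
    (σ : V ≃ₗ[ℚ] V) (hσq : ∀ v : V, q (σ v) = q v) (hσp : σ ^ p = 1)
    (M : Submodule ℤ V) (hMfg : M.FG) (hMfull : Submodule.span ℚ (M : Set V) = ⊤)
    (hMint : ∀ x ∈ M, ∃ n : ℤ, q x = (n : ℚ))
    (hσM : ∀ x ∈ M, σ x ∈ M)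
    (V₀ : Submodule ℚ V) (hV₀ : ∀ v : V, v ∈ V₀ ↔ σ v = v)
    (M₀ : Submodule ℤ V) (hM₀ : M₀ = M ⊓ V₀.restrictScalars ℤ)
    (n : ℕ) (hn : 1 ≤ n)
    (S : Matrix (Fin n) (Fin n) ℤ) (hSsymm : S.IsSymm)
    (hSpos : (S.map ((↑) : ℤ → ℚ)).PosDef) :
    (Nat.card {x : Fin n → V // (∀ i, x i ∈ M) ∧
        ∀ i j, QuadraticMap.polar q (x i) (x j) = (S i j : ℚ)} : ℤ) ≡
      (Nat.card {x : Fin n → V // (∀ i, x i ∈ M₀) ∧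
        ∀ i j, QuadraticMap.polar q (x i) (x j) = (S i j : ℚ)} : ℤ) [ZMOD (p : ℤ)] :=
  representation_numbers_congruent_fixed_lattice_general V q hqpos p hp σ hσq hσp M hMfg hσM V₀ hV₀
    M₀ hM₀ n S
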